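/- arXiv:1610.08781 — 2 statements merged into one kernel-verified Lean document; each statement's English description precedes it below -/
import Mathlib

section
/- Let P be the Puiseux monoid generated by { (p_{2n}² + 1)/p_{2n}, (p_{2n+1} + 1)/p_{2n+1} : n ∈ ℕ }, where (p_n) is a strictly increasing sequence of prime numbers. Then P is an FF-monoid but P is not generated by any increasing sequence. -/
/-!
Every generator has a prime denominator, and distinct generators have distinct ones. Reading a sum
of generators modulo the rationals whose denominator is prime to `q`, the multiplicity of the
generator with denominator `q` must be divisible by `q` unless `q` divides the denominator of the
sum. So every generator is an atom, and a factorization of `x` uses at most `x` atoms (they are all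
`≥ 1`), each with denominator dividing `den x` or at most `x`: there are finitely many.
The generators `1 + 1/p_{2n+1}` form a strictly decreasing sequence of atoms, which every
generating set contains, but a monotone sequence contains no strictly decreasing one.
-/

/-- `a` is an atom of the additive submonoid `P`. -/
def IsAtomOf {K : Type*} [AddCommMonoid K] (P : AddSubmonoid K) (a : K) : Prop :=
  a ∈ P ∧ a ≠ 0 ∧ ∀ x ∈ P, ∀ y ∈ P, a = x + y → x = 0 ∨ y = 0

/-- `P` is atomic: every element is a finite sum of atoms. -/
def IsAtomicMonoid {K : Type*} [AddCommMonoid K] (P : AddSubmonoid K) : Prop :=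
  ∀ x ∈ P, ∃ s : Multiset K, (∀ a ∈ s, IsAtomOf P a) ∧ s.sum = x

/-- The set of factorizations of `x` into atoms of `P`. -/
def Factorizations {K : Type*} [AddCommMonoid K] (P : AddSubmonoid K) (x : K) :
    Set (Multiset K) :=
  {s | (∀ a ∈ s, IsAtomOf P a) ∧ s.sum = x}

/-- `P` is an FF-monoid. -/
def IsFFMonoid {K : Type*} [AddCommMonoid K] (P : AddSubmonoid K) : Prop :=
  IsAtomicMonoid P ∧ ∀ x ∈ P, (Factorizations P x).Finite

/-- `P` is a BF-monoid. -/
def IsBFMonoid {K : Type*} [AddCommMonoid K] (P : AddSubmonoid K) : Prop :=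
  IsAtomicMonoid P ∧ ∀ x ∈ P, {n : ℕ | ∃ s ∈ Factorizations P x, Multiset.card s = n}.Finite


open Set Function AddSubmonoid

lemma mem_of_isAtomOf_closure {K : Type*} [AddCommMonoid K] {S : Set K} {a : K}
    (ha : IsAtomOf (closure S) a) : a ∈ S := by
  obtain ⟨haS, ha0, hsplit⟩ := ha
  induction haS using closure_induction with
  | mem x hx => exact hx
  | zero => exact absurd rfl ha0
  | add x y hx hy ihx ihy =>
    rcases hsplit x hx y hy rfl with rfl | rfl
    · rw [zero_add] at ha0 hsplit ⊢
      exact ihy ha0 hsplit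
    · rw [add_zero] at ha0 hsplit ⊢
      exact ihx ha0 hsplit

lemma isAtomicMonoid_closure {K : Type*} [AddCommMonoid K] {S : Set K}
    (hS : ∀ a ∈ S, IsAtomOf (closure S) a) : IsAtomicMonoid (closure S) := by
  intro x hx
  obtain ⟨s, hsS, rfl⟩ := exists_multiset_of_mem_closure hx
  exact ⟨s, fun a ha => hS a (hsS a ha), rfl⟩

lemma Monotone.not_range_subset_of_strictAnti {α : Type*} [Preorder α] {f g : ℕ → α}
    (hf : Monotone f) (hg : StrictAnti g) : ¬ range g ⊆ range f := by
  intro hgf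
  choose k hk using fun n => hgf (mem_range_self n)
  refine not_strictAnti_of_wellFoundedLT k fun m n hmn => lt_of_not_ge fun hle => ?_
  have hgle := hf hle
  rw [hk, hk] at hgle
  exact (hg hmn).not_ge hgle

lemma Multiset.finite_setOf_card_le {α : Type*} {A : Set α} (hA : A.Finite) (n : ℕ) :
    {s : Multiset α | (∀ a ∈ s, a ∈ A) ∧ card s ≤ n}.Finite := by
  classical
  refine (n • hA.toFinset.val).powerset.toFinset.finite_toSet.subset ?_
  rintro s ⟨hsA, hcard⟩
  simp only [Finset.mem_coe, Multiset.mem_toFinset, Multiset.mem_powerset, Multiset.le_iff_count]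
  intro a
  by_cases ha : a ∈ s
  · rw [Multiset.count_nsmul, Multiset.count_eq_one_of_mem hA.toFinset.nodup
      (hA.mem_toFinset.mpr (hsA a ha)), mul_one]
    exact (Multiset.count_le_card a s).trans hcard
  · simp [Multiset.count_eq_zero_of_notMem ha]

lemma Rat.den_nsmul_of_coprime {a : ℚ} {m : ℕ} (h : m.Coprime a.den) : (m • a).den = a.den := by
  rw [nsmul_eq_mul, Rat.mul_den, Rat.num_natCast, Rat.den_natCast, one_mul, Int.natAbs_mul,
    Int.natAbs_natCast, (h.mul_left a.reduced).gcd_eq_one, Nat.div_one]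

/-- For prime `r` this is the localization `ℤ_(r)`. -/
def coprimeDenSubgroup (r : ℕ) : AddSubgroup ℚ where
  carrier := {x | x.den.Coprime r}
  zero_mem' := Nat.coprime_one_left r
  add_mem' {a b} ha hb := Nat.Coprime.coprime_dvd_left (Rat.add_den_dvd a b) (ha.mul_left hb)
  neg_mem' {a} ha := by simpa only [mem_ofPred_eq, Rat.neg_den] using ha

lemma mem_coprimeDenSubgroup {r : ℕ} {x : ℚ} : x ∈ coprimeDenSubgroup r ↔ x.den.Coprime r :=
  Iff.rfl

section PrimeDenominators

variable {ι : Type*} {g : ι → ℚ}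

lemma sum_sub_count_nsmul_mem_coprimeDenSubgroup (hden : ∀ i, (g i).den.Prime)
    (hinj : Injective fun i => (g i).den) {L : Multiset ℚ} (hL : ∀ a ∈ L, a ∈ range g) (i : ι) :
    L.sum - L.count (g i) • g i ∈ coprimeDenSubgroup (g i).den := by
  have hsplit : L.sum = L.count (g i) • g i + (L.filter (· ≠ g i)).sum := by
    rw [← Multiset.sum_replicate, ← Multiset.filter_eq', ← Multiset.sum_add,
      Multiset.filter_add_not]
  rw [hsplit, add_sub_cancel_left]
  refine AddSubgroup.multiset_sum_mem _ _ fun a ha => ?_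
  obtain ⟨ha, hne⟩ := Multiset.mem_filter.mp ha
  obtain ⟨j, rfl⟩ := hL a ha
  exact (Nat.coprime_primes (hden j) (hden i)).mpr (hinj.ne (ne_of_apply_ne g hne))

lemma den_dvd_count_of_sum_mem (hden : ∀ i, (g i).den.Prime)
    (hinj : Injective fun i => (g i).den) {L : Multiset ℚ} (hL : ∀ a ∈ L, a ∈ range g) {i : ι}
    (hsum : L.sum ∈ coprimeDenSubgroup (g i).den) : (g i).den ∣ L.count (g i) := by
  rw [(hden i).dvd_iff_not_coprime]
  intro hcop
  have h := sub_mem hsum (sum_sub_count_nsmul_mem_coprimeDenSubgroup hden hinj hL i)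
  rw [sub_sub_cancel, mem_coprimeDenSubgroup, Rat.den_nsmul_of_coprime hcop.symm] at h
  exact (hden i).one_lt.ne' ((Nat.coprime_self _).mp h)

lemma mem_of_sum_notMem (hden : ∀ i, (g i).den.Prime)
    (hinj : Injective fun i => (g i).den) {L : Multiset ℚ} (hL : ∀ a ∈ L, a ∈ range g) {i : ι}
    (hsum : L.sum ∉ coprimeDenSubgroup (g i).den) : g i ∈ L := by
  by_contra hi
  have h := sum_sub_count_nsmul_mem_coprimeDenSubgroup hden hinj hL i
  rw [Multiset.count_eq_zero.mpr hi, zero_smul, sub_zero] at h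
  exact hsum h

lemma isAtomOf_closure_range (hden : ∀ i, (g i).den.Prime)
    (hinj : Injective fun i => (g i).den) (hnonneg : ∀ i, 0 ≤ g i) (i : ι) :
    IsAtomOf (closure (range g)) (g i) := by
  have hgi : g i ∉ coprimeDenSubgroup (g i).den := fun h =>
    (hden i).one_lt.ne' ((Nat.coprime_self _).mp h)
  refine ⟨subset_closure (mem_range_self i), (ne_of_mem_of_not_mem (zero_mem _) hgi).symm, ?_⟩
  intro x hx y hy hxy
  obtain ⟨Lx, hLx, rfl⟩ := exists_multiset_of_mem_closure hx
  obtain ⟨Ly, hLy, rfl⟩ := exists_multiset_of_mem_closure hy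
  have hnn : ∀ L : Multiset ℚ, (∀ a ∈ L, a ∈ range g) → ∀ a ∈ L, 0 ≤ a := by
    rintro L hL a ha
    obtain ⟨j, rfl⟩ := hL a ha
    exact hnonneg j
  have hmem : g i ∈ Lx + Ly :=
    mem_of_sum_notMem hden hinj (fun a ha => (Multiset.mem_add.mp ha).elim (hLx a) (hLy a))
      (by rwa [Multiset.sum_add, ← hxy])
  have hx0 := Multiset.sum_nonneg (hnn Lx hLx)
  have hy0 := Multiset.sum_nonneg (hnn Ly hLy)
  rcases Multiset.mem_add.mp hmem with h | h
  · have := Multiset.single_le_sum (hnn Lx hLx) _ h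
    right; linarith
  · have := Multiset.single_le_sum (hnn Ly hLy) _ h
    left; linarith

lemma factorizations_closure_range_finite (hden : ∀ i, (g i).den.Prime)
    (hinj : Injective fun i => (g i).den) (hone : ∀ i, 1 ≤ g i) (x : ℚ) :
    (Factorizations (closure (range g)) x).Finite := by
  have hfin : (g '' {i | (g i).den ≤ x.den + ⌈x⌉₊}).Finite :=
    ((finite_Iic _).preimage hinj.injOn).image g
  refine (Multiset.finite_setOf_card_le hfin ⌈x⌉₊).subset ?_
  rintro s ⟨hs, hsum⟩
  have hsg : ∀ a ∈ s, a ∈ range g := fun a ha => mem_of_isAtomOf_closure (hs a ha)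
  have hcard : Multiset.card s ≤ ⌈x⌉₊ := by
    have h := Multiset.card_nsmul_le_sum (a := (1 : ℚ)) fun a ha => by
      obtain ⟨i, rfl⟩ := hsg a ha
      exact hone i
    rw [nsmul_one, hsum] at h
    exact_mod_cast h.trans (Nat.le_ceil x)
  refine ⟨fun a ha => ?_, hcard⟩
  obtain ⟨i, rfl⟩ := hsg a ha
  refine mem_image_of_mem g ?_
  by_cases hdvd : (g i).den ∣ x.den
  · exact (Nat.le_of_dvd x.den_pos hdvd).trans (Nat.le_add_right _ _)
  · have hcount := den_dvd_count_of_sum_mem hden hinj hsg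
      (hsum ▸ ((hden i).coprime_iff_not_dvd.mpr hdvd).symm)
    calc (g i).den ≤ s.count (g i) := Nat.le_of_dvd (Multiset.count_pos.mpr ha) hcount
      _ ≤ Multiset.card s := Multiset.count_le_card _ _
      _ ≤ x.den + ⌈x⌉₊ := hcard.trans (Nat.le_add_left _ _)

theorem isFFMonoid_closure_range (hden : ∀ i, (g i).den.Prime)
    (hinj : Injective fun i => (g i).den) (hone : ∀ i, 1 ≤ g i) :
    IsFFMonoid (closure (range g)) := by
  refine ⟨isAtomicMonoid_closure ?_,
    fun x _ => factorizations_closure_range_finite hden hinj hone x⟩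
  rintro _ ⟨i, rfl⟩
  exact isAtomOf_closure_range hden hinj (fun j => zero_le_one.trans (hone j)) i

end PrimeDenominators

section PuiseuxGenerators

variable {p : ℕ → ℕ}

/-- Indexed by `ℕ ⊕ ℕ`, using `(q² + 1)/q = q + 1/q` and `(q + 1)/q = 1 + 1/q`. -/
def puiseuxGenerators (p : ℕ → ℕ) : ℕ ⊕ ℕ → ℚ :=
  Sum.elim (fun n => p (2 * n) + (p (2 * n) : ℚ)⁻¹) (fun n => 1 + (p (2 * n + 1) : ℚ)⁻¹)

lemma setOf_eq_range_puiseuxGenerators (hp : ∀ n, (p n).Prime) :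
    {q : ℚ | ∃ n : ℕ, q = ((p (2 * n) : ℚ) ^ 2 + 1) / (p (2 * n) : ℚ) ∨
      q = ((p (2 * n + 1) : ℚ) + 1) / (p (2 * n + 1) : ℚ)} = range (puiseuxGenerators p) := by
  have hp0 (n : ℕ) : (p n : ℚ) ≠ 0 := Nat.cast_ne_zero.mpr (hp n).ne_zero
  ext q
  simp only [puiseuxGenerators, Sum.elim_range, mem_union, mem_range, mem_ofPred_eq, exists_or,
    eq_comm (a := q)]
  congr! 4 <;> field_simp [hp0]

lemma den_puiseuxGenerators (hp : ∀ n, (p n).Prime) (i : ℕ ⊕ ℕ) :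
    (puiseuxGenerators p i).den = p (Sum.elim (2 * ·) (2 * · + 1) i) := by
  cases i <;> simp [puiseuxGenerators, (hp _).ne_zero]

lemma injective_den_puiseuxGenerators (hp : ∀ n, (p n).Prime) (hmono : StrictMono p) :
    Injective fun i => (puiseuxGenerators p i).den := by
  simp only [den_puiseuxGenerators hp]
  exact hmono.injective.comp <| (mul_right_injective₀ two_ne_zero).sumElim
    ((add_left_injective 1).comp (mul_right_injective₀ two_ne_zero)) fun _ _ => by omega

lemma one_le_puiseuxGenerators (hp : ∀ n, (p n).Prime) (i : ℕ ⊕ ℕ) :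
    1 ≤ puiseuxGenerators p i := by
  rcases i with n | n
  · have : (1 : ℚ) ≤ p (2 * n) := Nat.one_le_cast.mpr (hp _).one_le
    simp only [puiseuxGenerators, Sum.elim_inl]
    linarith [inv_nonneg.mpr (zero_le_one.trans this)]
  · simp [puiseuxGenerators]

lemma strictAnti_puiseuxGenerators_inr (hp : ∀ n, (p n).Prime) (hmono : StrictMono p) :
    StrictAnti (puiseuxGenerators p ∘ Sum.inr) := fun m n hmn => by
  simp only [comp_apply, puiseuxGenerators, Sum.elim_inr, add_lt_add_iff_left]
  exact inv_strictAnti₀ (Nat.cast_pos.mpr (hp _).pos) (Nat.cast_lt.mpr (hmono (by omega)))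

end PuiseuxGenerators

theorem ff_not_increasing (p : ℕ → ℕ) (hmono : StrictMono p) (hp : ∀ n, (p n).Prime)
    (P : AddSubmonoid ℚ)
    (hgen : AddSubmonoid.closure
        {q : ℚ | ∃ n : ℕ, q = ((p (2 * n) : ℚ) ^ 2 + 1) / (p (2 * n) : ℚ) ∨
          q = ((p (2 * n + 1) : ℚ) + 1) / (p (2 * n + 1) : ℚ)} = P) :
    IsFFMonoid P ∧
      ¬∃ f : ℕ → ℚ, Monotone f ∧ AddSubmonoid.closure (Set.range f) = P := by
  have hden i : (puiseuxGenerators p i).den.Prime := den_puiseuxGenerators hp i ▸ hp _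
  have hinj := injective_den_puiseuxGenerators hp hmono
  have hone := one_le_puiseuxGenerators hp
  rw [setOf_eq_range_puiseuxGenerators hp] at hgen
  subst hgen
  refine ⟨isFFMonoid_closure_range hden hinj hone, ?_⟩
  rintro ⟨f, hf, hfP⟩
  refine hf.not_range_subset_of_strictAnti (strictAnti_puiseuxGenerators_inr hp hmono) ?_
  rintro _ ⟨n, rfl⟩
  exact mem_of_isAtomOf_closure <|
    hfP ▸ isAtomOf_closure_range hden hinj (fun i => zero_le_one.trans (hone i)) (Sum.inr n)
end

section
/- Every additive submonoid of the nonnegative cone of an ordered field generated by an increasing sequence is hereditarily atomic. -/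
theorem Monotone.isPWO_range {α β : Type*} [Preorder α] [WellQuasiOrderedLE α] [Preorder β]
    {f : α → β} (hf : Monotone f) : (Set.range f).IsPWO := by
  simpa only [Set.image_univ] using (Set.isPWO_of_wellQuasiOrderedLE Set.univ).image_of_monotone hf

section OrderedMonoid

variable {M : Type*} [AddCommMonoid M] [PartialOrder M] [IsOrderedCancelAddMonoid M]

theorem AddSubmonoid.nonneg_of_mem_closure {s : Set M} (hs : ∀ x ∈ s, 0 ≤ x) {x : M}
    (hx : x ∈ AddSubmonoid.closure s) : 0 ≤ x := by
  induction hx using AddSubmonoid.closure_induction with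
  | mem y hy => exact hs y hy
  | zero => exact le_rfl
  | add y z _ _ hy hz => exact add_nonneg hy hz

theorem isAtomicMonoid_of_isWF {Q : AddSubmonoid M} (hQ : ∀ x ∈ Q, 0 ≤ x)
    (hwf : (Q : Set M).IsWF) : IsAtomicMonoid Q := by
  intro x hx
  apply hwf.induction hx
  intro x hx ih
  by_cases hx0 : x = 0
  · exact ⟨0, by simp, by simp [hx0]⟩
  by_cases hatom : IsAtomOf Q x
  · exact ⟨{x}, by simpa using hatom, Multiset.sum_singleton x⟩
  simp only [IsAtomOf, hx0, ne_eq, not_false_eq_true, true_and, not_and, not_forall, not_or]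
    at hatom
  obtain ⟨y, hy, z, hz, rfl, hy0, hz0⟩ := hatom hx
  have hy_lt : y < y + z := lt_add_of_pos_right y ((hQ z hz).lt_of_ne' hz0)
  have hz_lt : z < y + z := lt_add_of_pos_left z ((hQ y hy).lt_of_ne' hy0)
  obtain ⟨s, hs, rfl⟩ := ih y hy hy_lt
  obtain ⟨t, ht, rfl⟩ := ih z hz hz_lt
  refine ⟨s + t, fun a ha => ?_, Multiset.sum_add s t⟩
  exact (Multiset.mem_add.mp ha).elim (hs a) (ht a)

end OrderedMonoid

theorem increasing_positive_monoid_hereditarily_atomic {K : Type*} [Field K] [LinearOrder K] [IsStrictOrderedRing K]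
    (f : ℕ → K) (hf : Monotone f) (hnn : ∀ n, 0 ≤ f n)
    (P : AddSubmonoid K) (hgen : AddSubmonoid.closure (Set.range f) = P) :
    ∀ Q : AddSubmonoid K, Q ≤ P → IsAtomicMonoid Q := by
  intro Q hQP
  have hrange : ∀ x ∈ Set.range f, 0 ≤ x := Set.forall_mem_range.mpr hnn
  have hP_wf : (P : Set K).IsWF := hgen ▸ (hf.isPWO_range.addSubmonoid_closure hrange).isWF
  exact isAtomicMonoid_of_isWF
    (fun x hx => AddSubmonoid.nonneg_of_mem_closure hrange (hgen ▸ hQP hx)) (hP_wf.mono hQP)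
end
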